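/- If G is a block graph with 𝒫(G) ≠ ∅, then μ(G) = μ₁(G); that is, the minimum of μ_m(v,v') over all m and all pairs (v,v') ∈ 𝒫_m(G) is attained at m = 1. -/

import Mathlib

/-!
In a block graph, an inner vertex `x` of a geodesic from `u` to `v` separates `u` from `v`: a detour
around `x` would close a cycle through `x` and its successor `c`, whose vertices form a clique,
and the resulting chord from `c` back to the geodesic would shorten it. Hence a common separating
subset of the `m`-spheres of `v, v'` can be shrunk to a single cut vertex `c`. Let `g, g'` be the
neighbours of `c` on geodesics from `v, v'`. If `g = g'`, then `{g}` is a common separating subset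
of the `(m-1)`-spheres; otherwise `(g, g') ∈ 𝒫₁(G)` with separating set `{c}`, and every vertex
distinguishing `g, g'` distinguishes `v, v'`. Finally `μₘ(v,v')` just counts the vertices
distinguishing `v` and `v'`, since a vertex in a component avoiding `v` and `v'` reaches both
through `Sₘ(v,v')`, all of whose vertices are equidistant from `v` and `v'`.
-/

/-- Set of vertices distinguishing `u` and `v`. -/
noncomputable def distinguishers {V : Type*} (G : SimpleGraph V) (u v : V) : Set V :=
  {w | G.dist u w ≠ G.dist v w}

/-- `Dim(G)`: the largest `k` such that every pair of distinct vertices is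
distinguished by at least `k` vertices. -/
noncomputable def metricDim {V : Type*} (G : SimpleGraph V) : ℕ :=
  sSup {k | ∀ u v : V, u ≠ v → k ≤ (distinguishers G u v).ncard}

/-- The boundary `∂N(v,m)`: vertices at distance `m` from `v` having a
neighbor outside `N(v,m)`. -/
def bdry {V : Type*} (G : SimpleGraph V) (v : V) (m : ℕ) : Set V :=
  {w | G.dist v w = m ∧ ∃ x, G.Adj w x ∧ m < G.dist v x}

/-- `v` and `v'` are distinct and have equal (nonempty) `m`-boundary. -/
def eqBdry {V : Type*} (G : SimpleGraph V) (v v' : V) (m : ℕ) : Prop :=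
  v ≠ v' ∧ bdry G v m = bdry G v' m ∧ (bdry G v m).Nonempty

noncomputable def etaM {V : Type*} (G : SimpleGraph V) (v v' : V) (m : ℕ) : ℕ :=
  {w | (G.dist v w ≤ m ∨ G.dist v' w ≤ m) ∧ G.dist v w ≠ G.dist v' w}.ncard

noncomputable def etaG {V : Type*} (G : SimpleGraph V) : ℕ :=
  sInf {n | ∃ (m : ℕ) (v v' : V), eqBdry G v v' m ∧ n = etaM G v v' m}

/-- the diameter of `G`. -/
noncomputable def gdiam {V : Type*} (G : SimpleGraph V) : ℕ :=
  sSup {n | ∃ u v : V, G.dist u v = n}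

/-- Reachability in `G` avoiding the vertex set `S`. -/
def ReachOff {V : Type*} (G : SimpleGraph V) (S : Set V) (a b : V) : Prop :=
  ∃ p : G.Walk a b, ∀ x ∈ p.support, x ∉ S

/-- `S` is a common separating subset of the `m`-spheres of `v` and `v'`. -/
def CommonSepSubset {V : Type*} (G : SimpleGraph V) (v v' : V) (m : ℕ) (S : Set V) : Prop :=
  S ⊆ {w | G.dist v w = m} ∩ {w | G.dist v' w = m} ∧
  (∃ a b : V, a ∉ S ∧ b ∉ S ∧ ¬ ReachOff G S a b) ∧
  (∃ w : V, w ∉ S ∧ ¬ ReachOff G S w v ∧ ¬ ReachOff G S w v')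

/-- `(v,v') ∈ 𝒫ₘ(G)`. -/
def memPm {V : Type*} (G : SimpleGraph V) (v v' : V) (m : ℕ) : Prop :=
  v ≠ v' ∧ ∃ S : Set V, CommonSepSubset G v v' m S

/-- `Sₘ(v,v')`: the union of all common separating subsets of the `m`-spheres. -/
def SmUnion {V : Type*} (G : SimpleGraph V) (v v' : V) (m : ℕ) : Set V :=
  {x | ∃ S : Set V, CommonSepSubset G v v' m S ∧ x ∈ S}

/-- The union of the components of `G \ Sₘ(v,v')` containing neither `v` nor `v'`. -/
def avoidComps {V : Type*} (G : SimpleGraph V) (v v' : V) (m : ℕ) : Set V :=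
  {w | w ∉ SmUnion G v v' m ∧ ¬ ReachOff G (SmUnion G v v' m) w v ∧
    ¬ ReachOff G (SmUnion G v v' m) w v'}

noncomputable def muM {V : Type*} (G : SimpleGraph V) (v v' : V) (m : ℕ) : ℕ :=
  {w | w ∉ avoidComps G v v' m ∧ G.dist v w ≠ G.dist v' w}.ncard

noncomputable def muG {V : Type*} (G : SimpleGraph V) : ℕ :=
  sInf {n | ∃ (m : ℕ) (v v' : V), memPm G v v' m ∧ n = muM G v v' m}

/-- degree as the cardinality of the neighbor set. -/
noncomputable def ndeg {V : Type*} (G : SimpleGraph V) (v : V) : ℕ := (G.neighborSet v).ncard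

def IsMajor {V : Type*} (G : SimpleGraph V) (v : V) : Prop := 3 ≤ ndeg G v

/-- `u` is a terminal vertex of the major vertex `w`. -/
def IsTerminalOf {V : Type*} (G : SimpleGraph V) (u w : V) : Prop :=
  ndeg G u = 1 ∧ IsMajor G w ∧
    ∀ w', IsMajor G w' → w' ≠ w → G.dist u w < G.dist u w'

/-- `G` is a V-graph. -/
def IsVGraph {V : Type*} (G : SimpleGraph V) : Prop :=
  ∃ w, IsMajor G w ∧ {u | IsTerminalOf G u w}.ncard = 2 ∧
    ∀ u, IsTerminalOf G u w → G.Adj u w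

/-- `G` is a block graph: connected and every biconnected (2-connected)
set of vertices induces a clique. -/
def IsBlockGraph {V : Type*} (G : SimpleGraph V) : Prop :=
  G.Connected ∧ ∀ B : Set V, 3 ≤ B.ncard → (G.induce B).Connected →
    (∀ x ∈ B, (G.induce (B \ {x})).Connected) → G.IsClique B

/-- `G` is tagged. -/
def Tagged {V : Type*} (G : SimpleGraph V) : Prop :=
  ∃ K : Set V, G.IsClique K ∧ (∀ K' : Set V, K ⊆ K' → G.IsClique K' → K' = K) ∧
    3 ≤ K.ncard ∧ ∃ u ∈ K, ∃ v ∈ K, u ≠ v ∧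
      ndeg G u = K.ncard - 1 ∧ ndeg G v = K.ncard - 1

/-- `G` is neither a complete graph nor a path graph. -/
def NonElementary {V : Type*} (G : SimpleGraph V) : Prop :=
  G ≠ ⊤ ∧ ∀ n : ℕ, IsEmpty (G ≃g SimpleGraph.pathGraph n)

open SimpleGraph

section

variable {V : Type*} {G : SimpleGraph V}

namespace ReachOff

variable {S : Set V} {a b c : V}

theorem symm (h : ReachOff G S a b) : ReachOff G S b a := by
  obtain ⟨p, hp⟩ := h
  exact ⟨p.reverse, fun x hx => hp x (by simpa using hx)⟩

theorem trans (h₁ : ReachOff G S a b) (h₂ : ReachOff G S b c) : ReachOff G S a c := by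
  obtain ⟨p, hp⟩ := h₁
  obtain ⟨q, hq⟩ := h₂
  exact ⟨p.append q, fun x hx => ((Walk.mem_support_append_iff p q).1 hx).elim (hp x) (hq x)⟩

end ReachOff

theorem exists_mem_support_of_not_reachOff {S : Set V} {a b : V} (h : ¬ReachOff G S a b)
    (p : G.Walk a b) : ∃ x ∈ p.support, x ∈ S := by
  by_contra! hp
  exact h ⟨p, hp⟩

namespace SimpleGraph.Walk

variable {u v x : V} {p : G.Walk u v}

theorem dist_add_dist_of_mem_support (hp : p.length = G.dist u v) (hx : x ∈ p.support) :
    G.dist u x + G.dist x v = G.dist u v := by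
  classical
  have h₁ := dist_le (p.takeUntil x hx)
  have h₂ := dist_le (p.dropUntil x hx)
  have h₃ := (p.takeUntil x hx).reachable.dist_triangle_left v
  have h₄ : (p.takeUntil x hx).length + (p.dropUntil x hx).length = p.length := by
    rw [← length_append, take_spec]
  omega

theorem length_takeUntil_eq_dist [DecidableEq V] (hp : p.length = G.dist u v)
    (hx : x ∈ p.support) : (p.takeUntil x hx).length = G.dist u x := by
  have h₁ := dist_le (p.takeUntil x hx)
  have h₂ := dist_le (p.dropUntil x hx)
  have h₃ := dist_add_dist_of_mem_support hp hx
  have h₄ : (p.takeUntil x hx).length + (p.dropUntil x hx).length = p.length := by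
    rw [← length_append, take_spec]
  omega

end SimpleGraph.Walk

theorem SimpleGraph.Connected.exists_adj_dist_add_one_eq (hconn : G.Connected) {x v : V}
    (hxv : x ≠ v) : ∃ y, G.Adj x y ∧ G.dist y v + 1 = G.dist x v := by
  obtain ⟨p, hp⟩ := hconn.exists_walk_length_eq_dist x v
  obtain ⟨y, hxy, q, rfl⟩ := Walk.exists_eq_cons_of_ne hxv p
  have h₁ := dist_le q
  have h₂ := hxy.reachable.dist_triangle_left v
  rw [Walk.length_cons] at hp
  rw [dist_eq_one_iff_adj.2 hxy] at h₂
  exact ⟨y, hxy, by omega⟩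

theorem dist_eq_add_of_not_reachOff (hconn : G.Connected) {a b c : V}
    (h : ¬ReachOff G {c} a b) : G.dist a b = G.dist a c + G.dist c b := by
  obtain ⟨p, hp⟩ := hconn.exists_walk_length_eq_dist a b
  obtain ⟨x, hx, rfl⟩ := exists_mem_support_of_not_reachOff h p
  exact (p.dist_add_dist_of_mem_support hp hx).symm

theorem reachOff_singleton_of_dist_lt (hconn : G.Connected) {a b x : V}
    (h : G.dist a b < G.dist x b) : ReachOff G {x} a b := by
  obtain ⟨p, hp⟩ := hconn.exists_walk_length_eq_dist a b
  refine ⟨p, fun y hy (hyx : y = x) => ?_⟩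
  subst hyx
  have := p.dist_add_dist_of_mem_support hp hy
  omega

theorem eq_of_not_reachOff_singleton (hconn : G.Connected) {u v c c' : V}
    (hc : ¬ReachOff G {c} u v) (hc' : ¬ReachOff G {c'} u v) (hd : G.dist u c = G.dist u c') :
    c = c' := by
  classical
  obtain ⟨p, hp⟩ := hconn.exists_walk_length_eq_dist u v
  obtain ⟨_, h, rfl⟩ := exists_mem_support_of_not_reachOff hc p
  obtain ⟨_, h', rfl⟩ := exists_mem_support_of_not_reachOff hc' p
  rw [← p.getVert_length_takeUntil h, ← p.getVert_length_takeUntil h',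
    p.length_takeUntil_eq_dist hp, p.length_takeUntil_eq_dist hp, hd]

theorem dist_eq_add_or_dist_eq_add (hconn : G.Connected) {x y z : V}
    (hx : ¬ReachOff G {x} y z) (w : V) :
    G.dist w z = G.dist w x + G.dist x z ∨ G.dist w y = G.dist w x + G.dist x y := by
  by_cases hwy : ReachOff G {x} w y
  · exact .inl (dist_eq_add_of_not_reachOff hconn fun hwz => hx (hwy.symm.trans hwz))
  · exact .inr (dist_eq_add_of_not_reachOff hconn hwy)

theorem distinguishers_subset_of_not_reachOff (hconn : G.Connected) {x x' y y' z : V}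
    (hx : ¬ReachOff G {x} y z) (hx' : ¬ReachOff G {x'} y' z)
    (hz : G.dist x z = G.dist x' z) (hy : G.dist y x = G.dist y' x') :
    distinguishers G x x' ⊆ distinguishers G y y' := by
  intro w hw hyw
  apply hw
  have h₁ := dist_eq_add_or_dist_eq_add hconn hx w
  have h₂ := dist_eq_add_or_dist_eq_add hconn hx' w
  have t₁ := hconn.dist_triangle (u := w) (v := x) (w := z)
  have t₂ := hconn.dist_triangle (u := w) (v := x') (w := z)
  have t₃ := hconn.dist_triangle (u := w) (v := x) (w := y)
  have t₄ := hconn.dist_triangle (u := w) (v := x') (w := y')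
  rw [dist_comm (u := x) (v := y), dist_comm (u := x') (v := y')] at *
  rw [dist_comm (u := y) (v := w), dist_comm (u := y') (v := w)] at hyw
  rw [dist_comm (u := x) (v := w), dist_comm (u := x') (v := w)]
  omega

theorem dist_le_dist_of_not_reachOff (hconn : G.Connected) {U : Set V} {y y' w : V}
    (hU : ∀ s ∈ U, G.dist y s ≤ G.dist y' s) (h : ¬ReachOff G U y' w) :
    G.dist y w ≤ G.dist y' w := by
  obtain ⟨p, hp⟩ := hconn.exists_walk_length_eq_dist y' w
  obtain ⟨s, hs, hsU⟩ := exists_mem_support_of_not_reachOff h p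
  have := p.dist_add_dist_of_mem_support hp hs
  have := hconn.dist_triangle (u := y) (v := s) (w := w)
  have := hU s hsU
  omega

theorem muM_eq_ncard_distinguishers (hconn : G.Connected) (v v' : V) (m : ℕ) :
    muM G v v' m = (distinguishers G v v').ncard := by
  have hU : ∀ s ∈ SmUnion G v v' m, G.dist v s = G.dist v' s :=
    fun s ⟨_, hS, hs⟩ => (hS.1 hs).1.trans (hS.1 hs).2.symm
  refine congrArg Set.ncard (Set.ext fun w => ⟨And.right, fun hw => ⟨?_, hw⟩⟩)
  rintro ⟨-, hv, hv'⟩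
  exact hw (le_antisymm
    (dist_le_dist_of_not_reachOff hconn (fun s hs => (hU s hs).le) fun h => hv' h.symm)
    (dist_le_dist_of_not_reachOff hconn (fun s hs => (hU s hs).ge) fun h => hv h.symm))

theorem commonSepSubset_singleton {v v' c w : V} {m : ℕ} (hvc : v ≠ c)
    (hv : G.dist v c = m) (hv' : G.dist v' c = m) (hwc : w ≠ c)
    (hwv : ¬ReachOff G {c} w v) (hwv' : ¬ReachOff G {c} w v') :
    CommonSepSubset G v v' m {c} := by
  refine ⟨?_, ⟨w, v, hwc, hvc, hwv⟩, ⟨w, hwc, hwv, hwv'⟩⟩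
  rintro _ rfl
  exact ⟨hv, hv'⟩

theorem CommonSepSubset.ne_of_mem (hconn : G.Connected) {v v' s : V} {m : ℕ} {S : Set V}
    (hS : CommonSepSubset G v v' m S) (hvv' : v ≠ v') (hs : s ∈ S) : v ≠ s ∧ v' ≠ s := by
  obtain ⟨h₁, h₂⟩ : G.dist v s = m ∧ G.dist v' s = m := hS.1 hs
  constructor <;> rintro rfl
  · exact hvv' (hconn.dist_eq_zero_iff.1 (h₂.trans (h₁.symm.trans (dist_self ..)))).symm
  · exact hvv' (hconn.dist_eq_zero_iff.1 (h₁.trans (h₂.symm.trans (dist_self ..))))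

namespace SimpleGraph.Walk

theorem IsCycle.three_le_ncard_support {u : V} {c : G.Walk u u} (hc : c.IsCycle) :
    3 ≤ {x | x ∈ c.support}.ncard := by
  classical
  have hmem : {x | x ∈ c.support} = ↑c.support.tail.toFinset := by
    ext x
    rw [Finset.mem_coe, List.mem_toFinset]
    exact (c.mem_support_iff).trans
      (or_iff_right_of_imp fun h => h ▸ c.end_mem_tail_support hc.not_nil)
  rw [hmem, Set.ncard_coe_finset, List.toFinset_card_of_nodup hc.support_nodup,
    List.length_tail, length_support, Nat.add_sub_cancel]
  exact hc.three_le_length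

theorem IsCycle.connected_induce_support_diff_self {u : V} {c : G.Walk u u} (hc : c.IsCycle) :
    (G.induce ({x | x ∈ c.support} \ {u})).Connected := by
  cases c with
  | nil => exact absurd hc not_isCycle_nil
  | cons h p =>
    have hp := ((cons_isCycle_iff p h).1 hc).1
    obtain ⟨w, _, q, hq⟩ := exists_eq_cons_of_ne h.ne p.reverse
    have hnd := hp.reverse.support_nodup
    rw [hq, support_cons, List.nodup_cons] at hnd
    suffices hs : {x | x ∈ (cons h p).support} \ {u} = {x | x ∈ q.support} by
      rw [hs]
      exact q.connected_induce_support
    ext x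
    have hx : x ∈ p.support ↔ x = u ∨ x ∈ q.support := by
      rw [← List.mem_reverse, ← support_reverse, hq, support_cons, List.mem_cons]
    simp only [Set.mem_sdiff, Set.mem_ofPred_eq, Set.mem_singleton_iff, support_cons,
      List.mem_cons, hx]
    constructor
    · rintro ⟨rfl | rfl | h₁, h₂⟩ <;> first | exact absurd rfl h₂ | exact h₁
    · intro h₁
      exact ⟨.inr (.inr h₁), fun h₂ => hnd.1 (h₂ ▸ h₁)⟩

theorem IsCycle.connected_induce_support_diff {u x : V} {c : G.Walk u u} (hc : c.IsCycle)
    (hx : x ∈ c.support) : (G.induce ({y | y ∈ c.support} \ {x})).Connected := by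
  classical
  have hs : {y | y ∈ (c.rotate x hx).support} = {y | y ∈ c.support} :=
    Set.ext fun _ => mem_support_rotate_iff ..
  have h := (hc.rotate hx).connected_induce_support_diff_self
  rwa [hs] at h

theorem exists_walk_to_first_mem (T : Set V) {a b : V} (p : G.Walk a b) (hb : b ∈ T) :
    ∃ r ∈ T, ∃ q : G.Walk a r, q.support ⊆ p.support ∧ ∀ y ∈ q.support, y ∈ T → y = r := by
  induction p with
  | nil => exact ⟨_, hb, nil, List.Subset.refl _, by simp⟩
  | @cons a a' b h p ih =>
    by_cases ha : a ∈ T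
    · exact ⟨a, ha, nil, by simp, by simp⟩
    obtain ⟨r, hr, q, hqp, hqT⟩ := ih hb
    refine ⟨r, hr, cons h q, ?_, ?_⟩
    · simpa using List.cons_subset_cons a hqp
    · simp only [support_cons, List.mem_cons, forall_eq_or_imp]
      exact ⟨fun h => absurd h ha, hqT⟩

end SimpleGraph.Walk

namespace IsBlockGraph

variable (hG : IsBlockGraph G)
include hG

theorem isClique_support_of_isCycle {u : V} {c : G.Walk u u} (hc : c.IsCycle) :
    G.IsClique {x | x ∈ c.support} :=
  hG.2 _ hc.three_le_ncard_support c.connected_induce_support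
    fun _ hx => hc.connected_induce_support_diff hx

theorem not_reachOff_of_adj_of_dist_eq {u x c : V} (hxc : G.Adj x c)
    (hd : G.dist u c = G.dist u x + 1) : ¬ReachOff G {x} u c := by
  classical
  rintro ⟨Q, hQ⟩
  obtain ⟨P, hP⟩ := hG.1.exists_walk_length_eq_dist u x
  have hcP : c ∉ P.support := fun h => by
    have := P.dist_add_dist_of_mem_support hP h
    omega
  obtain ⟨r, hrP, q, hqQ, hqP⟩ :=
    Q.reverse.exists_walk_to_first_mem {y | y ∈ P.support} P.start_mem_support
  have hxq : x ∉ q.bypass.support := fun h =>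
    hQ x (by simpa using hqQ (q.support_bypass_subset_support h)) rfl
  have hrx : r ≠ x := fun h => hxq (h ▸ q.bypass.end_mem_support)
  set P₂ := P.dropUntil r hrP
  have hcyc : (Walk.cons hxc (q.bypass.append P₂)).IsCycle := by
    rw [Walk.cons_isCycle_iff, Walk.isPath_def, Walk.support_append, List.nodup_append]
    refine ⟨⟨q.bypass_isPath.support_nodup, (P.isPath_of_length_eq_dist hP).dropUntil hrP
      |>.support_nodup.sublist (List.tail_sublist _), fun y hy y' hy' hyy' => ?_⟩, fun he => ?_⟩
    · subst hyy'
      have hyr := hqP y (q.support_bypass_subset_support hy)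
        (P.support_dropUntil_subset_support hrP (List.mem_of_mem_tail hy'))
      subst hyr
      have := (P.isPath_of_length_eq_dist hP).dropUntil hrP |>.support_nodup
      rw [← P₂.cons_tail_support, List.nodup_cons] at this
      exact this.1 hy'
    · rcases List.mem_append.1 (Walk.edges_append _ _ ▸ he) with he | he
      · exact hxq (q.bypass.fst_mem_support_of_mem_edges he)
      · exact hcP (P.support_dropUntil_subset_support hrP
          (P₂.snd_mem_support_of_mem_edges he))
  have hcr : G.Adj c r := hG.isClique_support_of_isCycle hcyc (by simp) (by simp [P₂])
    fun h => hcP (h ▸ hrP)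
  have h₁ := P.dist_add_dist_of_mem_support hP hrP
  have h₂ := hG.1.pos_dist_of_ne hrx
  have h₃ := hG.1.dist_triangle (u := u) (v := r) (w := c)
  rw [dist_eq_one_iff_adj.2 hcr.symm] at h₃
  omega

theorem exists_adj_not_reachOff {v c : V} (hvc : v ≠ c) :
    ∃ g, G.Adj g c ∧ G.dist v g + 1 = G.dist v c ∧ ¬ReachOff G {g} v c := by
  obtain ⟨g, hcg, hg⟩ := hG.1.exists_adj_dist_add_one_eq hvc.symm
  rw [dist_comm (u := g), dist_comm (u := c)] at hg
  exact ⟨g, hcg.symm, hg, hG.not_reachOff_of_adj_of_dist_eq hcg.symm hg.symm⟩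

theorem not_reachOff_of_dist_add_dist_eq {u v x : V} (hxv : x ≠ v)
    (h : G.dist u x + G.dist x v = G.dist u v) : ¬ReachOff G {x} u v := by
  obtain ⟨b, hxb, hb⟩ := hG.1.exists_adj_dist_add_one_eq hxv
  have h₁ := hG.1.dist_triangle (u := u) (v := x) (w := b)
  have h₂ := hG.1.dist_triangle (u := u) (v := b) (w := v)
  rw [dist_eq_one_iff_adj.2 hxb] at h₁
  have hub : ¬ReachOff G {x} u b := hG.not_reachOff_of_adj_of_dist_eq hxb (by omega)
  exact fun huv => hub (huv.trans (reachOff_singleton_of_dist_lt hG.1 (by omega)).symm)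

theorem exists_mem_not_reachOff_singleton {S : Set V} {u v : V} (hv : v ∉ S)
    (h : ¬ReachOff G S u v) : ∃ c ∈ S, ¬ReachOff G {c} u v := by
  obtain ⟨P, hP⟩ := hG.1.exists_walk_length_eq_dist u v
  obtain ⟨c, hcP, hcS⟩ := exists_mem_support_of_not_reachOff h P
  exact ⟨c, hcS, hG.not_reachOff_of_dist_add_dist_eq (ne_of_mem_of_not_mem hcS hv)
    (P.dist_add_dist_of_mem_support hP hcP)⟩

theorem exists_commonSepSubset_singleton {v v' : V} {m : ℕ} (h : memPm G v v' m) :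
    ∃ c, CommonSepSubset G v v' m {c} := by
  obtain ⟨hvv', S, hS'⟩ := h
  have hne : ∀ s ∈ S, v ≠ s ∧ v' ≠ s := fun _ => hS'.ne_of_mem hG.1 hvv'
  obtain ⟨hS, -, w, hwS, hwv, hwv'⟩ := hS'
  obtain ⟨c₁, hc₁S, hc₁⟩ :=
    hG.exists_mem_not_reachOff_singleton (fun h => (hne v h).1 rfl) hwv
  obtain ⟨c₂, hc₂S, hc₂⟩ :=
    hG.exists_mem_not_reachOff_singleton (fun h => (hne v' h).2 rfl) hwv'
  obtain ⟨c, hcS, hcv, hcv'⟩ : ∃ c ∈ S, ¬ReachOff G {c} w v ∧ ¬ReachOff G {c} w v' := by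
    by_cases h₁ : ReachOff G {c₁} w v'
    · by_cases h₂ : ReachOff G {c₂} w v
      · -- then `c₁` and `c₂` both separate `v` from `v'` at distance `m` from `v`
        have hc : c₁ = c₂ := eq_of_not_reachOff_singleton hG.1
          (fun h => hc₁ (h₁.trans h.symm)) (fun h => hc₂ (h₂.trans h))
          ((hS hc₁S).1.trans (hS hc₂S).1.symm)
        exact absurd (hc ▸ h₁) hc₂
      · exact ⟨c₂, hc₂S, h₂, hc₂⟩
    · exact ⟨c₁, hc₁S, hc₁, h₁⟩
  exact ⟨c, commonSepSubset_singleton (hne c hcS).1 (hS hcS).1 (hS hcS).2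
    (by rintro rfl; exact hwS hcS) hcv hcv'⟩

theorem exists_memPm_one_of_commonSepSubset_singleton {m : ℕ} :
    ∀ {v v' c : V}, v ≠ v' → CommonSepSubset G v v' m {c} →
      ∃ x x', memPm G x x' 1 ∧ distinguishers G x x' ⊆ distinguishers G v v' := by
  induction m with
  | zero =>
    intro v v' c hvv' hS
    exact ((hS.ne_of_mem hG.1 hvv' rfl).1 (hG.1.dist_eq_zero_iff.1 (hS.1 rfl).1)).elim
  | succ k ih =>
    intro v v' c hvv' hS
    obtain ⟨hvc, hv'c⟩ := hS.ne_of_mem hG.1 hvv' rfl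
    obtain ⟨hv, hv'⟩ : G.dist v c = k + 1 ∧ G.dist v' c = k + 1 := hS.1 rfl
    obtain ⟨-, -, w, hwc, hwv, hwv'⟩ := hS
    obtain ⟨g, hgc, hvg, hg⟩ := hG.exists_adj_not_reachOff hvc
    obtain ⟨g', hg'c, hv'g', hg'⟩ := hG.exists_adj_not_reachOff hv'c
    rw [hv] at hvg
    rw [hv'] at hv'g'
    by_cases hgg' : g = g'
    · subst hgg'
      have hvg_ne : v ≠ g := by
        rintro rfl
        rw [SimpleGraph.dist_self] at hvg
        exact hvv' (hG.1.dist_eq_zero_iff.1 (by omega)).symm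
      exact ih hvv' (commonSepSubset_singleton hvg_ne (by omega) (by omega) hgc.ne.symm
        (fun h => hg h.symm) (fun h => hg' h.symm))
    · have hgv : ReachOff G {c} g v := reachOff_singleton_of_dist_lt hG.1 (by
        rw [SimpleGraph.dist_comm, SimpleGraph.dist_comm (u := c)]; omega)
      have hg'v' : ReachOff G {c} g' v' := reachOff_singleton_of_dist_lt hG.1 (by
        rw [SimpleGraph.dist_comm, SimpleGraph.dist_comm (u := c)]; omega)
      refine ⟨g, g', ⟨hgg', {c}, commonSepSubset_singleton hgc.ne (dist_eq_one_iff_adj.2 hgc)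
        (dist_eq_one_iff_adj.2 hg'c) hwc (fun h => hwv (h.trans hgv))
        (fun h => hwv' (h.trans hg'v'))⟩, ?_⟩
      exact distinguishers_subset_of_not_reachOff hG.1 hg hg'
        ((dist_eq_one_iff_adj.2 hgc).trans (dist_eq_one_iff_adj.2 hg'c).symm) (by omega)

theorem exists_memPm_one {v v' : V} {m : ℕ} (h : memPm G v v' m) :
    ∃ x x', memPm G x x' 1 ∧ distinguishers G x x' ⊆ distinguishers G v v' :=
  let ⟨_, hc⟩ := hG.exists_commonSepSubset_singleton h
  hG.exists_memPm_one_of_commonSepSubset_singleton h.1 hc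

end IsBlockGraph

end

theorem sInf_eq_sInf_of_subset_of_forall_exists_le {A B : Set ℕ} (hBA : B ⊆ A)
    (h : ∀ a ∈ A, ∃ b ∈ B, b ≤ a) : sInf A = sInf B := by
  rcases A.eq_empty_or_nonempty with rfl | hA
  · rw [Set.subset_empty_iff.1 hBA]
  obtain ⟨b, hb, hba⟩ := h _ (Nat.sInf_mem hA)
  exact le_antisymm (Nat.sInf_le (hBA (Nat.sInf_mem ⟨b, hb⟩))) ((Nat.sInf_le hb).trans hba)

theorem stmt19_general {V : Type*} [Fintype V] (G : SimpleGraph V)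
    (hG : IsBlockGraph G) :
    muG G = sInf {n | ∃ v v' : V, memPm G v v' 1 ∧ n = muM G v v' 1} := by
  refine sInf_eq_sInf_of_subset_of_forall_exists_le
    (fun _ ⟨v, v', hp, hn⟩ => ⟨1, v, v', hp, hn⟩) ?_
  rintro _ ⟨m, v, v', hp, rfl⟩
  obtain ⟨x, x', hx, hsub⟩ := hG.exists_memPm_one hp
  refine ⟨_, ⟨x, x', hx, rfl⟩, ?_⟩
  rw [muM_eq_ncard_distinguishers hG.1, muM_eq_ncard_distinguishers hG.1]
  exact Set.ncard_le_ncard hsub (Set.toFinite _)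

theorem stmt19 {V : Type*} [Fintype V] (G : SimpleGraph V)
    (hG : IsBlockGraph G) (h : ∃ (m : ℕ) (v v' : V), memPm G v v' m) :
    muG G = sInf {n | ∃ v v' : V, memPm G v v' 1 ∧ n = muM G v v' 1} :=
  stmt19_general G hG
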